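/- arXiv:1308.6813 — 6 statements merged into one kernel-verified Lean document; each statement's English description precedes it below -/
import Mathlib

section
/- The number of receding stacks with summits of size n equals the number of integer partitions of n. Here a receding stack with summit of size n is a sequence a_1 ≤ a_2 ≤ ... ≤ a_r ≤ c ≥ b_s ≥ ... ≥ b_1 of positive integers summing to n, satisfying a_j ≥ a_{j+1} - 1 for all 1 ≤ j ≤ r-1 and b_j ≤ b_{j+1} + 1 for all 1 ≤ j ≤ s-1, together with a choice of one occurrence of the maximum value c (a marked summit). -/
/-- The size of a stack, given as a triple `(a, c, b)`: the increasing run `a`,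
the marked summit `c`, and the decreasing run `b` (listed from the summit outward). -/
def stackSize (s : List ℕ × ℕ × List ℕ) : ℕ := s.1.sum + s.2.1 + s.2.2.sum

/-- A receding stack with summit: `a₁ ≤ ... ≤ a_r ≤ c ≥ b_s ≥ ... ≥ b₁`, all parts
positive and at most `c`, and every part size from `1` to `c-1` appears among the
`a`'s and among the `b`'s (equivalently, the difference conditions `aⱼ ≥ a_{j+1} - 1`
and `bⱼ ≤ b_{j+1} + 1`).  The marked summit is the component `c`. -/
def IsRecedingStackWithSummit (s : List ℕ × ℕ × List ℕ) : Prop :=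
  s.1.Chain' (· ≤ ·) ∧ s.2.2.Chain' (· ≥ ·) ∧
  (∀ x ∈ s.1, 1 ≤ x ∧ x ≤ s.2.1) ∧ (∀ x ∈ s.2.2, 1 ≤ x ∧ x ≤ s.2.1) ∧
  (∀ k, 1 ≤ k → k < s.2.1 → k ∈ s.1) ∧ (∀ k, 1 ≤ k → k < s.2.1 → k ∈ s.2.2)

/-!
Both runs of a receding stack with summit `c` consist of parts in `[1, c]` and contain each of
`1, …, c - 1`. Removing these two staircases leaves two arbitrary multisets `A`, `B` of parts in
`[1, c]`, and the stack size becomes `c + 2 * (1 + ⋯ + (c - 1)) + ΣA + ΣB = c² + ΣA + ΣB`. Such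
triples `(c, A, B)` are exactly the Durfee-square decompositions of partitions of `n`: `c` is the
side of the Durfee square, `B` the partition below it and the conjugate of `A` the partition to its
right, which has at most `c` parts.
-/

open Multiset
open scoped Finset

def columnLength (M : Multiset ℕ) (t : ℕ) : ℕ := M.countP (t < ·)

/-- When all parts of `M` are at most `L`, this is the conjugate partition padded with zeros to
`L` parts. -/
def conjugate (L : ℕ) (M : Multiset ℕ) : Multiset ℕ := (range L).map (columnLength M)

lemma columnLength_antitone (M : Multiset ℕ) : Antitone (columnLength M) := by
  intro s t hst
  induction M using Multiset.induction with
  | empty => simp [columnLength]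
  | cons a M ih =>
    simp only [columnLength, countP_cons] at *
    split_ifs <;> omega

lemma columnLength_le_card (M : Multiset ℕ) (t : ℕ) : columnLength M t ≤ card M :=
  countP_le_card _ _

lemma columnLength_eq_zero {M : Multiset ℕ} {t : ℕ} (h : ∀ x ∈ M, x ≤ t) :
    columnLength M t = 0 :=
  countP_eq_zero.2 fun x hx => by simpa using h x hx

lemma countP_le_eq_count_add_columnLength (M : Multiset ℕ) (t : ℕ) :
    M.countP (t ≤ ·) = M.count t + columnLength M t := by
  induction M using Multiset.induction with
  | empty => simp [columnLength]
  | cons a M ih =>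
    simp only [columnLength, countP_cons, count_cons] at *
    split_ifs <;> omega

lemma count_succ_add_columnLength (M : Multiset ℕ) (t : ℕ) :
    M.count (t + 1) + columnLength M (t + 1) = columnLength M t := by
  rw [← countP_le_eq_count_add_columnLength]
  rfl

lemma count_zero_add_columnLength (M : Multiset ℕ) :
    M.count 0 + columnLength M 0 = card M := by
  rw [← countP_le_eq_count_add_columnLength]
  simp

lemma eq_of_card_eq_of_columnLength_eq {M N : Multiset ℕ} (hcard : card M = card N)
    (h : columnLength M = columnLength N) : M = N := by
  ext v
  rcases v with _ | t
  · have := count_zero_add_columnLength M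
    have := count_zero_add_columnLength N
    rw [h] at *
    omega
  · have := count_succ_add_columnLength M t
    have := count_succ_add_columnLength N t
    rw [h] at *
    omega

lemma eq_of_columnLength_eq {M N : Multiset ℕ} (hM : ∀ x ∈ M, 0 < x) (hN : ∀ x ∈ N, 0 < x)
    (h : columnLength M = columnLength N) : M = N := by
  refine eq_of_card_eq_of_columnLength_eq ?_ h
  rw [← count_zero_add_columnLength, ← count_zero_add_columnLength N, h,
    count_eq_zero.2 fun h0 => (hM 0 h0).false, count_eq_zero.2 fun h0 => (hN 0 h0).false]

/-- The Galois correspondence behind conjugation of partitions. -/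
lemma lt_card_filter_lt_iff {g : ℕ → ℕ} (hg : Antitone g) {L t j : ℕ} (ht : t < L) :
    t < #{i ∈ Finset.range L | j < g i} ↔ j < g t := by
  constructor
  · intro h
    by_contra! hgt
    have : {i ∈ Finset.range L | j < g i} ⊆ Finset.range t := fun i hi => by
      simp only [Finset.mem_filter, Finset.mem_range] at hi ⊢
      by_contra! hti
      exact absurd (hi.2.trans_le (hg hti)) (not_lt.2 hgt)
    have := Finset.card_le_card this
    rw [Finset.card_range] at this
    omega
  · intro h
    have : Finset.range (t + 1) ⊆ {i ∈ Finset.range L | j < g i} := fun i hi => by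
      simp only [Finset.mem_filter, Finset.mem_range] at hi ⊢
      exact ⟨by omega, h.trans_le (hg (by omega))⟩
    simpa using Finset.card_le_card this

lemma card_filter_range_lt (L a : ℕ) : #{i ∈ Finset.range L | i < a} = min L a := by
  rw [← Finset.card_range (min L a)]
  congr 1
  ext i
  simp only [Finset.mem_filter, Finset.mem_range]
  omega

lemma card_conjugate (L : ℕ) (M : Multiset ℕ) : card (conjugate L M) = L := by
  simp [conjugate]

lemma columnLength_conjugate (L : ℕ) (M : Multiset ℕ) (t : ℕ) :
    columnLength (conjugate L M) t = #{i ∈ Finset.range L | t < columnLength M i} := by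
  rw [columnLength, conjugate, countP_map, Finset.card_def, Finset.filter_val]
  rfl

lemma columnLength_conjugate_conjugate {L K : ℕ} {M : Multiset ℕ} (hM : ∀ x ∈ M, x ≤ L)
    (hK : card M ≤ K) : columnLength (conjugate K (conjugate L M)) = columnLength M := by
  funext t
  simp only [columnLength_conjugate]
  by_cases ht : t < L
  · have hle : columnLength M t ≤ K := (columnLength_le_card M t).trans hK
    rw [Finset.filter_congr fun j _ => lt_card_filter_lt_iff (columnLength_antitone M) ht,
      card_filter_range_lt, min_eq_right hle]
  · rw [columnLength_eq_zero fun x hx => (hM x hx).trans (not_lt.1 ht), Finset.card_eq_zero,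
      Finset.filter_eq_empty_iff]
    intro j _ hj
    have := (Finset.card_filter_le (Finset.range L) fun i => j < columnLength M i).trans_eq
      (Finset.card_range L)
    omega

lemma sum_conjugate {L : ℕ} {M : Multiset ℕ} (hM : ∀ x ∈ M, x ≤ L) :
    (conjugate L M).sum = M.sum := by
  induction M using Multiset.induction with
  | empty =>
    have : columnLength 0 = fun _ => 0 := funext fun _ => countP_zero _
    simp [conjugate, this]
  | cons a M ih =>
    have hcons : columnLength (a ::ₘ M) = fun i => columnLength M i + if i < a then 1 else 0 := by
      funext i
      simp [columnLength, countP_cons]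
    rw [conjugate, hcons, sum_map_add, ← conjugate, ih fun x hx => hM x (mem_cons_of_mem hx),
      sum_cons, add_comm a]
    congr
    change ∑ i ∈ Finset.range L, (if i < a then 1 else 0) = a
    rw [Finset.sum_boole, Nat.cast_id, card_filter_range_lt,
      min_eq_right (hM a (mem_cons_self a M))]

lemma columnLength_filter_pos (M : Multiset ℕ) :
    columnLength (M.filter (0 < ·)) = columnLength M := by
  funext t
  rw [columnLength, countP_filter]
  exact countP_congr rfl fun x _ => propext ⟨And.left, fun h => ⟨h, (Nat.zero_le t).trans_lt h⟩⟩

lemma conjugate_injective {c : ℕ} {A A' : Multiset ℕ} (hA : ∀ a ∈ A, 0 < a ∧ a ≤ c)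
    (hA' : ∀ a ∈ A', 0 < a ∧ a ≤ c) (h : conjugate c A = conjugate c A') : A = A' := by
  refine eq_of_columnLength_eq (fun a ha => (hA a ha).1) (fun a ha => (hA' a ha).1) ?_
  rw [← columnLength_conjugate_conjugate (K := card A + card A') (fun a ha => (hA a ha).2)
      (Nat.le_add_right _ _), h,
    columnLength_conjugate_conjugate (fun a ha => (hA' a ha).2) (Nat.le_add_left _ _)]

lemma exists_conjugate_eq {c : ℕ} {R : Multiset ℕ} (hR : card R = c) :
    ∃ A : Multiset ℕ, (∀ a ∈ A, 0 < a ∧ a ≤ c) ∧ conjugate c A = R := by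
  refine ⟨(conjugate R.sum R).filter (0 < ·), fun a ha => ?_, ?_⟩
  · obtain ⟨ha, hpos⟩ := mem_filter.1 ha
    obtain ⟨i, -, rfl⟩ := mem_map.1 ha
    exact ⟨hpos, hR ▸ columnLength_le_card R i⟩
  · refine eq_of_card_eq_of_columnLength_eq (by rw [card_conjugate, hR]) ?_
    funext t
    rw [columnLength_conjugate, columnLength_filter_pos, ← columnLength_conjugate,
      columnLength_conjugate_conjugate (fun x hx => le_sum_of_mem hx) hR.le]

def IsDurfeeSide (P : Multiset ℕ) (c : ℕ) : Prop :=
  c ≤ P.countP (c ≤ ·) ∧ columnLength P c ≤ c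

lemma IsDurfeeSide.unique {P : Multiset ℕ} {c d : ℕ} (hc : IsDurfeeSide P c)
    (hd : IsDurfeeSide P d) : c = d := by
  suffices ∀ {c d}, IsDurfeeSide P c → IsDurfeeSide P d → ¬ c < d from
    le_antisymm (not_lt.1 (this hd hc)) (not_lt.1 (this hc hd))
  intro c d hc hd hcd
  obtain ⟨e, rfl⟩ : ∃ e, d = e + 1 := ⟨d - 1, by omega⟩
  have : columnLength P e ≤ columnLength P c := columnLength_antitone P (by omega)
  have := hd.1
  change e + 1 ≤ columnLength P e at this
  have := hc.2
  omega

lemma exists_isDurfeeSide (P : Multiset ℕ) : ∃ c, IsDurfeeSide P c := by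
  have hex : ∃ k, columnLength P k ≤ k := ⟨card P, columnLength_le_card P _⟩
  refine ⟨Nat.find hex, ?_, Nat.find_spec hex⟩
  rcases h : Nat.find hex with _ | e
  · exact Nat.zero_le _
  · have := Nat.find_min hex (show e < Nat.find hex by omega)
    change e + 1 ≤ columnLength P e
    omega

lemma columnLength_map_add_add {c : ℕ} {R B : Multiset ℕ} (hB : ∀ b ∈ B, b ≤ c) (t : ℕ) :
    columnLength (R.map (c + ·) + B) (c + t) = columnLength R t := by
  rw [columnLength, countP_add, countP_map, ← columnLength,
    columnLength_eq_zero fun b hb => (hB b hb).trans (Nat.le_add_right c t), add_zero,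
    columnLength, countP_eq_card_filter]
  congr 1
  exact filter_congr fun x _ => by omega

lemma isDurfeeSide_map_add_add {c : ℕ} {R B : Multiset ℕ} (hR : card R = c)
    (hB : ∀ b ∈ B, b ≤ c) : IsDurfeeSide (R.map (c + ·) + B) c := by
  refine ⟨?_, ?_⟩
  · rw [countP_add, countP_map, filter_eq_self.2 fun x _ => Nat.le_add_right c x, hR]
    exact Nat.le_add_right _ _
  · simpa [hR] using (columnLength_map_add_add hB 0).trans_le (columnLength_le_card R 0)

lemma exists_map_add_add_eq {P : Multiset ℕ} {c : ℕ} (hP : ∀ p ∈ P, 0 < p)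
    (hc : IsDurfeeSide P c) :
    ∃ R B : Multiset ℕ, card R = c ∧ (∀ b ∈ B, 0 < b ∧ b ≤ c) ∧ R.map (c + ·) + B = P := by
  have hsplit := countP_le_eq_count_add_columnLength P c
  have hcount0 : P.count 0 = 0 := count_eq_zero.2 fun h0 => (hP 0 h0).false
  refine ⟨(P.filter (c < ·)).map (· - c) + replicate (c - columnLength P c) 0,
    P.filter (· < c) + replicate (P.countP (c ≤ ·) - c) c, ?_, fun b hb => ?_, ?_⟩
  · rw [card_add, card_map, card_replicate, ← countP_eq_card_filter, ← columnLength]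
    exact Nat.add_sub_cancel' hc.2
  · rcases mem_add.1 hb with hb | hb
    · obtain ⟨hbP, hbc⟩ := mem_filter.1 hb
      exact ⟨hP b hbP, hbc.le⟩
    · obtain ⟨hk, rfl⟩ := mem_replicate.1 hb
      refine ⟨Nat.pos_of_ne_zero fun h0 => hk ?_, le_rfl⟩
      subst h0
      have := hc.2
      omega
  · have hrows : ((P.filter (c < ·)).map (· - c)).map (c + ·) = P.filter (c < ·) := by
      rw [map_map]
      conv_rhs => rw [← map_id (P.filter (c < ·))]
      exact map_congr rfl fun x hx => by have := (mem_filter.1 hx).2; simp; omega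
    rw [map_add, hrows, map_replicate]
    ext v
    simp only [count_add, count_filter, count_replicate]
    have := hc.1
    have := hc.2
    split_ifs <;> subst_vars <;> omega

lemma sum_map_const_add (c : ℕ) (R : Multiset ℕ) : (R.map (c + ·)).sum = card R * c + R.sum := by
  rw [sum_map_add, map_const', sum_replicate, map_id', smul_eq_mul]

/-- A Durfee square of side `side`, the conjugate `left` of the part to its right, and the part
`right` below it; equally, a summit `side` with the two runs of a stack less a staircase each. -/
@[ext]
structure DurfeeData (n : ℕ) where
  side : ℕ
  left : Multiset ℕ
  right : Multiset ℕ
  mem_left : ∀ a ∈ left, 0 < a ∧ a ≤ side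
  mem_right : ∀ b ∈ right, 0 < b ∧ b ≤ side
  size_eq : side ^ 2 + left.sum + right.sum = n

namespace DurfeeData

variable {n : ℕ}

def toPartition (x : DurfeeData n) : Nat.Partition n where
  parts := (conjugate x.side x.left).map (x.side + ·) + x.right
  parts_pos {p} hp := by
    rcases mem_add.1 hp with hp | hp
    · obtain ⟨r, hr, rfl⟩ := mem_map.1 hp
      obtain ⟨i, hi, -⟩ := mem_map.1 hr
      have := mem_range.1 hi
      omega
    · exact (x.mem_right p hp).1
  parts_sum := by
    rw [sum_add, sum_map_const_add, card_conjugate, sum_conjugate fun a ha => (x.mem_left a ha).2,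
      ← sq, x.size_eq]

lemma toPartition_injective : Function.Injective (toPartition (n := n)) := by
  intro x y hxy
  have hparts := congrArg Nat.Partition.parts hxy
  simp only [toPartition] at hparts
  have hside : x.side = y.side :=
    (isDurfeeSide_map_add_add (card_conjugate _ _) fun b hb => (x.mem_right b hb).2).unique
      (hparts ▸ isDurfeeSide_map_add_add (card_conjugate _ _) fun b hb => (y.mem_right b hb).2)
  have hcols : conjugate x.side x.left = conjugate x.side y.left := by
    refine eq_of_card_eq_of_columnLength_eq (by simp only [card_conjugate]) (funext fun t => ?_)
    rw [← columnLength_map_add_add (fun b hb => (x.mem_right b hb).2) t, hparts, hside,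
      columnLength_map_add_add (fun b hb => (y.mem_right b hb).2) t]
  have hleft : x.left = y.left :=
    conjugate_injective x.mem_left (hside ▸ y.mem_left) hcols
  rw [hleft, hside] at hparts
  exact DurfeeData.ext hside hleft (add_left_cancel hparts)

lemma toPartition_surjective : Function.Surjective (toPartition (n := n)) := by
  intro P
  obtain ⟨c, hc⟩ := exists_isDurfeeSide P.parts
  obtain ⟨R, B, hR, hB, hRB⟩ := exists_map_add_add_eq (fun p hp => P.parts_pos hp) hc
  obtain ⟨A, hA, rfl⟩ := exists_conjugate_eq hR
  refine ⟨⟨c, A, B, hA, hB, ?_⟩, Nat.Partition.ext hRB⟩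
  rw [← P.parts_sum, ← hRB, sum_add, sum_map_const_add, card_conjugate,
    sum_conjugate fun a ha => (hA a ha).2, sq]

end DurfeeData

def staircase (c : ℕ) : Multiset ℕ := Ico 1 c

lemma staircase_le_coe_iff {c : ℕ} {l : List ℕ} :
    staircase c ≤ ↑l ↔ ∀ k, 1 ≤ k → k < c → k ∈ l := by
  simp [staircase, le_iff_subset nodup_Ico, subset_iff, mem_Ico, and_imp]

lemma two_mul_sum_staircase_add (c : ℕ) : 2 * (staircase c).sum + c = c ^ 2 := by
  have hsum : (staircase c).sum = ∑ i ∈ Finset.Ico 1 c, i := by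
    rw [Finset.sum_eq_multiset_sum, map_id']
    rfl
  rw [hsum]
  rcases c with _ | c
  · simp
  · have := Finset.sum_range_id_mul_two (c + 1)
    rw [Finset.range_eq_Ico, Finset.sum_eq_sum_Ico_succ_bot (Nat.succ_pos c)] at this
    simp only [zero_add, add_tsub_cancel_right] at this
    rw [sq]
    nlinarith

lemma mem_add_staircase {c x : ℕ} {A : Multiset ℕ} (hA : ∀ a ∈ A, 0 < a ∧ a ≤ c)
    (hx : x ∈ A + staircase c) : 1 ≤ x ∧ x ≤ c := by
  rcases mem_add.1 hx with hx | hx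
  · exact hA x hx
  · have := mem_Ico.1 hx
    omega

lemma sort_coe_of_isChain {α : Type*} {r : α → α → Prop} [DecidableRel r] [IsTrans α r]
    [Std.Antisymm r] [Std.Total r] {l : List α} (hl : l.IsChain r) : sort (↑l) r = l := by
  rw [coe_sort]
  exact List.mergeSort_eq_self r (List.isChain_iff_pairwise.1 hl)

abbrev RecedingStack (n : ℕ) :=
  {s : List ℕ × ℕ × List ℕ // IsRecedingStackWithSummit s ∧ stackSize s = n}

section RecedingStack

variable {n : ℕ}

def toDurfeeData (s : RecedingStack n) : DurfeeData n where
  side := s.1.2.1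
  left := ↑s.1.1 - staircase s.1.2.1
  right := ↑s.1.2.2 - staircase s.1.2.1
  mem_left x hx := s.2.1.2.2.1 x (mem_of_le tsub_le_self hx)
  mem_right x hx := s.2.1.2.2.2.1 x (mem_of_le tsub_le_self hx)
  size_eq := by
    obtain ⟨⟨a, c, b⟩, ⟨-, -, -, -, hca, hcb⟩, hsize⟩ := s
    dsimp only [stackSize] at hca hcb hsize ⊢
    have hsa := congrArg sum (tsub_add_cancel_of_le (staircase_le_coe_iff.2 hca))
    have hsb := congrArg sum (tsub_add_cancel_of_le (staircase_le_coe_iff.2 hcb))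
    rw [sum_add, sum_coe] at hsa hsb
    have := two_mul_sum_staircase_add c
    omega

def ofDurfeeData (x : DurfeeData n) : RecedingStack n := by
  refine ⟨(sort (x.left + staircase x.side), x.side, sort (x.right + staircase x.side) (· ≥ ·)),
    ⟨?_, ?_, fun y hy => ?_, fun y hy => ?_, fun k hk hkc => ?_, fun k hk hkc => ?_⟩, ?_⟩
  · exact List.isChain_iff_pairwise.2 (pairwise_sort _ _)
  · exact List.isChain_iff_pairwise.2 (pairwise_sort _ _)
  · exact mem_add_staircase x.mem_left ((mem_sort _).1 hy)
  · exact mem_add_staircase x.mem_right ((mem_sort _).1 hy)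
  · exact (mem_sort _).2 (mem_add.2 (Or.inr (mem_Ico.2 ⟨hk, hkc⟩)))
  · exact (mem_sort _).2 (mem_add.2 (Or.inr (mem_Ico.2 ⟨hk, hkc⟩)))
  · have := two_mul_sum_staircase_add x.side
    have := x.size_eq
    simp only [stackSize, ← sum_coe, sort_eq, sum_add]
    omega

def stackEquiv (n : ℕ) : RecedingStack n ≃ DurfeeData n where
  toFun := toDurfeeData
  invFun := ofDurfeeData
  left_inv := by
    rintro ⟨⟨a, c, b⟩, ⟨hsa, hsb, -, -, hca, hcb⟩, -⟩
    simp only [toDurfeeData, ofDurfeeData, tsub_add_cancel_of_le (staircase_le_coe_iff.2 hca),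
      tsub_add_cancel_of_le (staircase_le_coe_iff.2 hcb), sort_coe_of_isChain hsa,
      sort_coe_of_isChain hsb]
  right_inv x := by
    ext <;> simp [toDurfeeData, ofDurfeeData]

end RecedingStack

/-- The number of receding stacks with summits of size `n` equals the number of
integer partitions of `n`. -/
theorem recedingStacksWithSummits_eq_partitions (n : ℕ) :
    Nat.card {s : List ℕ × ℕ × List ℕ // IsRecedingStackWithSummit s ∧ stackSize s = n} =
      Fintype.card (Nat.Partition n) := by
  calc Nat.card (RecedingStack n) = Nat.card (DurfeeData n) := Nat.card_congr (stackEquiv n)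
    _ = Nat.card (Nat.Partition n) :=
      Nat.card_eq_of_bijective _
        ⟨DurfeeData.toPartition_injective, DurfeeData.toPartition_surjective⟩
    _ = Fintype.card (Nat.Partition n) := Nat.card_eq_fintype_card
end

section
/- For every n ≥ 0, the number F_0(n) of Frobenius symbols of size n containing a zero in the top row equals the number g(n) of receding stacks of size n. -/
/-- A Frobenius symbol: two equal-length strictly decreasing sequences of
nonnegative integers. -/
def IsFrobeniusSymbol (F : List ℕ × List ℕ) : Prop :=
  F.1.length = F.2.length ∧ F.1.Chain' (· > ·) ∧ F.2.Chain' (· > ·)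

/-- The size of a Frobenius symbol `(α; β)` is `k + ∑ αⱼ + ∑ βⱼ`. -/
def frobSize (F : List ℕ × List ℕ) : ℕ := F.1.length + F.1.sum + F.2.sum

/-- A receding stack: `a₁ ≤ ... ≤ a_r ≤ c > b_s ≥ ... ≥ b₁`, all parts positive,
and every part size from `1` to `c-1` appears among the `a`'s and among the `b`'s. -/
def IsRecedingStack (s : List ℕ × ℕ × List ℕ) : Prop :=
  1 ≤ s.2.1 ∧ s.1.Chain' (· ≤ ·) ∧ s.2.2.Chain' (· ≥ ·) ∧
  (∀ x ∈ s.1, 1 ≤ x ∧ x ≤ s.2.1) ∧ (∀ x ∈ s.2.2, 1 ≤ x ∧ x < s.2.1) ∧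
  (∀ k, 1 ≤ k → k < s.2.1 → k ∈ s.1) ∧ (∀ k, 1 ≤ k → k < s.2.1 → k ∈ s.2.2)

/-!
Conjugation of partitions gives the bijection. Read the rows `α`, `β` of a Frobenius symbol
with `k` columns as partitions: the stack has peak `c = k`, left side the conjugate of `β` in
increasing order and right side the conjugate of `α`. Since `α` and `β` are strictly decreasing,
every size `1, …, k - 1` occurs on both sides, and `0 ∈ α` says exactly that the right side stays
below `k`. Conjugation preserves size, and the first `c` parts of the conjugates of the two sides
of a receding stack give back `α` and `β`.
-/

namespace FrobeniusSymbol

/-- The first `m` parts of the conjugate of the partition with parts `l`, padded with zeros: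
its `j`-th entry (from `0`) is the number of parts of `l` exceeding `j`. -/
def conjugate (m : ℕ) (l : List ℕ) : List ℕ :=
  (List.range m).map fun j => l.countP (j < ·)

@[simp]
theorem length_conjugate (m : ℕ) (l : List ℕ) : (conjugate m l).length = m := by
  simp [conjugate]

@[simp]
theorem getElem_conjugate (m : ℕ) (l : List ℕ) (j : ℕ) (hj : j < (conjugate m l).length) :
    (conjugate m l)[j] = l.countP (j < ·) := by
  simp [conjugate]

theorem mem_conjugate {m x : ℕ} {l : List ℕ} :
    x ∈ conjugate m l ↔ ∃ j < m, l.countP (j < ·) = x := by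
  simp [conjugate]

@[simp]
theorem conjugate_reverse (m : ℕ) (l : List ℕ) : conjugate m l.reverse = conjugate m l := by
  simp [conjugate]

theorem countP_range_lt (m x : ℕ) : (List.range m).countP (· < x) = min m x := by
  induction m with
  | zero => simp
  | succ m ih =>
    simp only [List.range_succ, List.countP_append, ih, List.countP_singleton, decide_eq_true_eq]
    split_ifs <;> omega

theorem sum_range_ite_lt (m x : ℕ) :
    ((List.range m).map fun j => if j < x then 1 else 0).sum = min m x := by
  induction m with
  | zero => simp
  | succ m ih =>
    rw [List.sum_range_succ, ih]
    split_ifs <;> omega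

theorem countP_lt_eq_countP_succ_lt_add_count (l : List ℕ) (j : ℕ) :
    l.countP (j < ·) = l.countP (j + 1 < ·) + l.count (j + 1) := by
  induction l with
  | nil => simp
  | cons a l ih =>
    simp only [List.countP_cons, List.count_cons, ih, decide_eq_true_eq, beq_iff_eq]
    split_ifs <;> omega

theorem lt_countP_lt_iff {l : List ℕ} (hl : l.Pairwise (· ≥ ·)) {i j : ℕ} (hi : i < l.length) :
    i < l.countP (j < ·) ↔ j < l[i] := by
  induction l generalizing i with
  | nil => simp at hi
  | cons a l ih =>
    obtain ⟨ha, hl⟩ := List.pairwise_cons.1 hl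
    rcases i with _ | i
    · simp only [List.countP_pos_iff, List.mem_cons, decide_eq_true_eq, List.getElem_cons_zero]
      exact ⟨fun ⟨x, hx, hjx⟩ => hx.elim (· ▸ hjx) fun hx => hjx.trans_le (ha x hx),
        fun h => ⟨a, .inl rfl, h⟩⟩
    · simp only [List.countP_cons, List.getElem_cons_succ, decide_eq_true_eq]
      by_cases hja : j < a
      · simp [hja, ih hl (by simpa using hi)]
      · have hzero : l.countP (j < ·) = 0 :=
          List.countP_eq_zero.2 fun x hx => by have := ha x hx; simp; omega
        have := ha _ (l.getElem_mem (by simpa using hi))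
        simp only [hja, hzero, if_false]
        omega

theorem conjugate_conjugate {m : ℕ} {l : List ℕ} (hl : l.Pairwise (· ≥ ·))
    (hm : ∀ x ∈ l, x ≤ m) : conjugate l.length (conjugate m l) = l := by
  refine List.ext_getElem (by simp) fun i hi _ => ?_
  have hi' : i < l.length := by simpa using hi
  rw [getElem_conjugate, conjugate, List.countP_map]
  calc (List.range m).countP _ = (List.range m).countP (· < l[i]) :=
        List.countP_congr fun j _ => by simpa using lt_countP_lt_iff hl hi'
    _ = l[i] := by rw [countP_range_lt]; exact min_eq_right (hm _ (l.getElem_mem hi'))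

theorem sum_conjugate {m : ℕ} {l : List ℕ} (hm : ∀ x ∈ l, x ≤ m) :
    (conjugate m l).sum = l.sum := by
  induction l with
  | nil => simp [conjugate]
  | cons a l ih =>
    simp only [List.forall_mem_cons] at hm
    simp only [conjugate, List.countP_cons, decide_eq_true_eq, List.sum_map_add] at ih ⊢
    rw [ih hm.2, sum_range_ite_lt, List.sum_cons, min_eq_right hm.1, add_comm]

theorem pairwise_ge_conjugate (m : ℕ) (l : List ℕ) : (conjugate m l).Pairwise (· ≥ ·) :=
  List.pairwise_map.2 <| List.pairwise_lt_range.imp fun hjk =>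
    List.countP_mono_left fun x _ => by simp only [decide_eq_true_eq]; omega

theorem pairwise_gt_conjugate {m : ℕ} {l : List ℕ} (hl : ∀ v, 1 ≤ v → v < m → v ∈ l) :
    (conjugate m l).Pairwise (· > ·) := by
  refine List.pairwise_map.2 <| List.pairwise_lt_range.imp_of_mem fun {j k} _ hk hjk => ?_
  have hmem : 0 < l.count (j + 1) :=
    List.count_pos_iff.2 (hl _ (by omega) (by have := List.mem_range.1 hk; omega))
  have hmono : l.countP (k < ·) ≤ l.countP (j + 1 < ·) :=
    List.countP_mono_left fun x _ => by simp only [decide_eq_true_eq]; omega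
  rw [countP_lt_eq_countP_succ_lt_add_count l j]
  omega

theorem le_length_of_mem_conjugate {m x : ℕ} {l : List ℕ} (hx : x ∈ conjugate m l) :
    x ≤ l.length := by
  obtain ⟨j, -, rfl⟩ := mem_conjugate.1 hx
  exact List.countP_le_length

theorem lt_length_of_mem_conjugate {m x : ℕ} {l : List ℕ} (h0 : 0 ∈ l)
    (hx : x ∈ conjugate m l) : x < l.length := by
  obtain ⟨j, -, rfl⟩ := mem_conjugate.1 hx
  refine List.countP_le_length.lt_of_ne fun h => ?_
  simpa using List.countP_eq_length.1 h 0 h0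

theorem le_headD_of_mem {l : List ℕ} (hl : l.Pairwise (· ≥ ·)) {x : ℕ} (hx : x ∈ l) :
    x ≤ l.headD 0 := by
  cases l with
  | nil => simp at hx
  | cons a l => exact (List.mem_cons.1 hx).elim (·.le) fun hx => List.rel_of_pairwise_cons hl hx

theorem pos_of_mem_conjugate_headD {l : List ℕ} (hl : l.Pairwise (· ≥ ·)) {x : ℕ}
    (hx : x ∈ conjugate (l.headD 0) l) : 0 < x := by
  obtain ⟨j, hj, rfl⟩ := mem_conjugate.1 hx
  cases l with
  | nil => simp at hj
  | cons a l => exact (lt_countP_lt_iff hl (by simp)).2 hj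

theorem mem_conjugate_headD {l : List ℕ} (hl : l.Pairwise (· > ·)) {v : ℕ} (hv : 1 ≤ v)
    (hvl : v < l.length) : v ∈ conjugate (l.headD 0) l := by
  have hl' : l.Pairwise (· ≥ ·) := hl.imp le_of_lt
  have hrel (i k : ℕ) (hik : i < k) (hk : k < l.length) : l[k] < l[i] :=
    List.pairwise_iff_getElem.1 hl i k (by omega) hk hik
  refine mem_conjugate.2 ⟨l[v], ?_, ?_⟩
  · cases l with
    | nil => simp at hvl
    | cons a l => simpa using hrel 0 v (by omega) hvl
  · have hlo := (lt_countP_lt_iff hl' (i := v - 1) (by omega)).2 (hrel _ _ (by omega) hvl)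
    have hhi := (lt_countP_lt_iff hl' (i := v) hvl).not.2 (lt_irrefl _)
    omega

theorem headD_conjugate {m : ℕ} {l : List ℕ} (hm : 0 < m) (hl : ∀ x ∈ l, 0 < x) :
    (conjugate m l).headD 0 = l.length := by
  obtain ⟨m, rfl⟩ := Nat.exists_eq_add_of_lt hm
  simpa [conjugate, List.range_succ_eq_map] using hl

theorem zero_mem_conjugate {m : ℕ} {l : List ℕ} (hm : 0 < m) (hl : ∀ x ∈ l, x < m) :
    0 ∈ conjugate m l :=
  mem_conjugate.2 ⟨m - 1, by omega, List.countP_eq_zero.2 fun x hx => by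
    have := hl x hx; simp only [decide_eq_true_eq]; omega⟩

def toStack (F : List ℕ × List ℕ) : List ℕ × ℕ × List ℕ :=
  ((conjugate (F.2.headD 0) F.2).reverse, F.1.length, conjugate (F.1.headD 0) F.1)

def ofStack (s : List ℕ × ℕ × List ℕ) : List ℕ × List ℕ :=
  (conjugate s.2.1 s.2.2, conjugate s.2.1 s.1)

theorem isRecedingStack_toStack {F : List ℕ × List ℕ} (hF : IsFrobeniusSymbol F)
    (h0 : 0 ∈ F.1) : IsRecedingStack (toStack F) := by
  obtain ⟨α, β⟩ := F
  obtain ⟨hlen, hα, hβ⟩ := hF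
  replace hα : α.Pairwise (· > ·) := List.isChain_iff_pairwise.1 hα
  replace hβ : β.Pairwise (· > ·) := List.isChain_iff_pairwise.1 hβ
  have hα' : α.Pairwise (· ≥ ·) := hα.imp le_of_lt
  have hβ' : β.Pairwise (· ≥ ·) := hβ.imp le_of_lt
  dsimp only [IsRecedingStack, toStack] at hlen h0 ⊢
  refine ⟨List.length_pos_of_mem h0, ?_, ?_, fun x hx => ?_, fun x hx => ?_,
    fun v hv hvk => ?_, fun v hv hvk => ?_⟩
  · exact List.isChain_iff_pairwise.2 (List.pairwise_reverse.2 (pairwise_ge_conjugate _ _))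
  · exact List.isChain_iff_pairwise.2 (pairwise_ge_conjugate _ _)
  · rw [List.mem_reverse] at hx
    exact ⟨pos_of_mem_conjugate_headD hβ' hx, hlen ▸ le_length_of_mem_conjugate hx⟩
  · exact ⟨pos_of_mem_conjugate_headD hα' hx, lt_length_of_mem_conjugate h0 hx⟩
  · exact List.mem_reverse.2 (mem_conjugate_headD hβ hv (hlen ▸ hvk))
  · exact mem_conjugate_headD hα hv hvk

theorem stackSize_toStack {F : List ℕ × List ℕ} (hF : IsFrobeniusSymbol F) :
    stackSize (toStack F) = frobSize F := by
  obtain ⟨α, β⟩ := F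
  obtain ⟨-, hα, hβ⟩ := hF
  have hα' : α.Pairwise (· ≥ ·) := (List.isChain_iff_pairwise.1 hα).imp le_of_lt
  have hβ' : β.Pairwise (· ≥ ·) := (List.isChain_iff_pairwise.1 hβ).imp le_of_lt
  simp only [stackSize, frobSize, toStack, List.sum_reverse,
    sum_conjugate fun x => le_headD_of_mem hα', sum_conjugate fun x => le_headD_of_mem hβ']
  omega

theorem isFrobeniusSymbol_ofStack {s : List ℕ × ℕ × List ℕ} (hs : IsRecedingStack s) :
    IsFrobeniusSymbol (ofStack s) :=
  ⟨by simp [ofStack], List.isChain_iff_pairwise.2 (pairwise_gt_conjugate hs.2.2.2.2.2.2),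
    List.isChain_iff_pairwise.2 (pairwise_gt_conjugate hs.2.2.2.2.2.1)⟩

theorem zero_mem_ofStack {s : List ℕ × ℕ × List ℕ} (hs : IsRecedingStack s) :
    0 ∈ (ofStack s).1 :=
  zero_mem_conjugate hs.1 fun x hx => (hs.2.2.2.2.1 x hx).2

theorem frobSize_ofStack {s : List ℕ × ℕ × List ℕ} (hs : IsRecedingStack s) :
    frobSize (ofStack s) = stackSize s := by
  obtain ⟨a, c, b⟩ := s
  obtain ⟨-, -, -, ha, hb, -, -⟩ := hs
  simp only [frobSize, stackSize, ofStack, length_conjugate,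
    sum_conjugate fun x hx => (hb x hx).2.le, sum_conjugate fun x hx => (ha x hx).2]
  omega

theorem ofStack_toStack {F : List ℕ × List ℕ} (hF : IsFrobeniusSymbol F) :
    ofStack (toStack F) = F := by
  obtain ⟨α, β⟩ := F
  obtain ⟨hlen, hα, hβ⟩ := hF
  have hα' : α.Pairwise (· ≥ ·) := (List.isChain_iff_pairwise.1 hα).imp le_of_lt
  have hβ' : β.Pairwise (· ≥ ·) := (List.isChain_iff_pairwise.1 hβ).imp le_of_lt
  dsimp only at hlen
  simp only [ofStack, toStack, conjugate_reverse, Prod.mk.injEq]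
  refine ⟨conjugate_conjugate hα' fun x => le_headD_of_mem hα', ?_⟩
  rw [hlen]
  exact conjugate_conjugate hβ' fun x => le_headD_of_mem hβ'

theorem toStack_ofStack {s : List ℕ × ℕ × List ℕ} (hs : IsRecedingStack s) :
    toStack (ofStack s) = s := by
  obtain ⟨a, c, b⟩ := s
  obtain ⟨hc, ha, hb, ha_mem, hb_mem, -, -⟩ := hs
  have ha' : a.reverse.Pairwise (· ≥ ·) :=
    List.pairwise_reverse.2 (List.isChain_iff_pairwise.1 ha)
  have hb' : b.Pairwise (· ≥ ·) := List.isChain_iff_pairwise.1 hb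
  simp only [toStack, ofStack, length_conjugate, Prod.mk.injEq, true_and]
  rw [headD_conjugate hc fun x hx => (ha_mem x hx).1, headD_conjugate hc fun x hx => (hb_mem x hx).1,
    ← conjugate_reverse c a, ← List.length_reverse (as := a),
    conjugate_conjugate ha' fun x hx => (ha_mem x (List.mem_reverse.1 hx)).2,
    conjugate_conjugate hb' fun x hx => (hb_mem x hx).2.le, List.reverse_reverse]
  exact ⟨rfl, rfl⟩

def equivRecedingStack (n : ℕ) :
    {F : List ℕ × List ℕ // IsFrobeniusSymbol F ∧ 0 ∈ F.1 ∧ frobSize F = n} ≃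
      {s : List ℕ × ℕ × List ℕ // IsRecedingStack s ∧ stackSize s = n} where
  toFun F := ⟨toStack F, isRecedingStack_toStack F.2.1 F.2.2.1,
    (stackSize_toStack F.2.1).trans F.2.2.2⟩
  invFun s := ⟨ofStack s, isFrobeniusSymbol_ofStack s.2.1, zero_mem_ofStack s.2.1,
    (frobSize_ofStack s.2.1).trans s.2.2⟩
  left_inv F := Subtype.ext (ofStack_toStack F.2.1)
  right_inv s := Subtype.ext (toStack_ofStack s.2.1)

end FrobeniusSymbol

/-- For every `n ≥ 0`, the number of Frobenius symbols of size `n` containing a zero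
in the top row equals the number of receding stacks of size `n`. -/
theorem frobeniusWithZero_eq_recedingStacks (n : ℕ) :
    Nat.card {F : List ℕ × List ℕ // IsFrobeniusSymbol F ∧ 0 ∈ F.1 ∧ frobSize F = n} =
      Nat.card {s : List ℕ × ℕ × List ℕ // IsRecedingStack s ∧ stackSize s = n} :=
  Nat.card_congr (FrobeniusSymbol.equivRecedingStack n)
end

section
/- The generating function for semi-strict stacks satisfies ∑_{m ≥ 0} (-q;q)_m q^{m+1} / (q;q)_m = q (q²;q²)_∞ / ((1+q) ((q;q)_∞)²) as an identity of formal power series (equivalently, of holomorphic functions on |q| < 1). -/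
open PowerSeries

/-- The q-Pochhammer symbol `(q;q)_m = ∏_{j=1}^m (1 - q^j)`. -/
noncomputable def qPoch (m : ℕ) : PowerSeries ℚ :=
  ∏ j ∈ Finset.range m, (1 - PowerSeries.X ^ (j + 1))

/-- The q-Pochhammer symbol `(-q;q)_m = ∏_{j=1}^m (1 + q^j)`. -/
noncomputable def negqPoch (m : ℕ) : PowerSeries ℚ :=
  ∏ j ∈ Finset.range m, (1 + PowerSeries.X ^ (j + 1))

/-- The infinite product `(q;q)_∞ = ∏_{j≥1}(1 - q^j)`, defined coefficientwise
(the `n`-th coefficient agrees with that of any partial product with at least `n`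
factors). -/
noncomputable def qPochInf : PowerSeries ℚ :=
  PowerSeries.mk fun n => PowerSeries.coeff n (qPoch (n + 1))

/-- The infinite product `(q²;q²)_∞ = ∏_{j≥1}(1 - q^{2j})`, defined coefficientwise. -/
noncomputable def qPochInf2 : PowerSeries ℚ :=
  PowerSeries.mk fun n =>
    PowerSeries.coeff n (∏ j ∈ Finset.range (n + 1), (1 - PowerSeries.X ^ (2 * (j + 1))))

/-- The formal sum `∑_{m ≥ 0} F m` of a family of power series in which the `m`-th
term has order at least `m`, defined coefficientwise. -/
noncomputable def formalSum (F : ℕ → PowerSeries ℚ) : PowerSeries ℚ :=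
  PowerSeries.mk fun n => ∑ m ∈ Finset.range (n + 1), PowerSeries.coeff n (F m)

/-!
The partial sums telescope: with `F m = (-q;q)_m q^{m+1} / (q;q)_m`,
`(1 + q) (q;q)_N ∑_{m<N} F m = q (-q;q)_N (1 - q^N)`, and `(-q;q)_N (q;q)_N = (q²;q²)_N`.
Multiplying by `(q;q)_N` once more, the partial sum satisfies the claimed identity up to the
error term `q^N`, while every infinite sum and product agrees with its `N`-th partial one
modulo `q^N`. So both sides of the identity agree modulo `q^N` for every `N`.
-/

namespace PowerSeries

variable {R : Type*} [CommRing R]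

theorem eq_of_forall_X_pow_dvd_sub {f g : R⟦X⟧} (h : ∀ N, X ^ N ∣ f - g) : f = g := by
  ext n
  rw [← sub_eq_zero, ← map_sub]
  exact X_pow_dvd_iff.mp (h (n + 1)) n n.lt_succ_self

theorem X_pow_dvd_sub_of_le {P : ℕ → R⟦X⟧} (hP : ∀ M, X ^ M ∣ P (M + 1) - P M) {M M' : ℕ}
    (h : M ≤ M') : X ^ M ∣ P M' - P M := by
  induction M', h using Nat.le_induction with
  | base => simp
  | succ M' hMM' ih =>
    rw [← sub_add_sub_cancel (P (M' + 1)) (P M') (P M)]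
    exact dvd_add ((pow_dvd_pow X hMM').trans (hP M')) ih

/-- For an `X`-adically Cauchy sequence `P`, the series `mk fun n => coeff n (P (n + 1))` is its
limit; `qPochInf`, `qPochInf2` and `formalSum` are all of this form. -/
theorem X_pow_dvd_mk_coeff_succ_sub {P : ℕ → R⟦X⟧} (hP : ∀ M, X ^ M ∣ P (M + 1) - P M)
    (N : ℕ) : X ^ N ∣ mk (fun n => coeff n (P (n + 1))) - P N := by
  refine X_pow_dvd_iff.mpr fun k hk => ?_
  have hcoeff := X_pow_dvd_iff.mp (X_pow_dvd_sub_of_le hP hk) k k.lt_succ_self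
  rw [map_sub] at hcoeff
  rw [map_sub, coeff_mk, ← neg_eq_zero, neg_sub, hcoeff]

theorem X_pow_dvd_prod_range_succ_sub {f : ℕ → R⟦X⟧} (hf : ∀ j, X ^ j ∣ f j - 1) (M : ℕ) :
    X ^ M ∣ ∏ j ∈ Finset.range (M + 1), f j - ∏ j ∈ Finset.range M, f j := by
  rw [Finset.prod_range_succ, ← mul_sub_one]
  exact dvd_mul_of_dvd_right (hf M) _

theorem X_pow_dvd_one_sub_X_pow_sub_one {j e : ℕ} (h : j ≤ e) :
    (X : R⟦X⟧) ^ j ∣ (1 - X ^ e) - 1 := by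
  rw [sub_sub_cancel_left, dvd_neg]
  exact pow_dvd_pow X h

end PowerSeries

theorem X_pow_dvd_formalSum_sub {F : ℕ → ℚ⟦X⟧} (hF : ∀ m, X ^ m ∣ F m) (N : ℕ) :
    X ^ N ∣ formalSum F - ∑ m ∈ Finset.range N, F m := by
  have hmk : formalSum F = mk fun n => coeff n (∑ m ∈ Finset.range (n + 1), F m) := by
    ext n
    simp [formalSum, map_sum]
  rw [hmk]
  refine X_pow_dvd_mk_coeff_succ_sub (P := fun M => ∑ m ∈ Finset.range M, F m) (fun M => ?_) N
  rw [Finset.sum_range_succ, add_sub_cancel_left]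
  exact hF M

theorem X_pow_dvd_qPochInf_sub (N : ℕ) : X ^ N ∣ qPochInf - qPoch N :=
  X_pow_dvd_mk_coeff_succ_sub (P := qPoch)
    (X_pow_dvd_prod_range_succ_sub fun j => X_pow_dvd_one_sub_X_pow_sub_one j.le_succ) N

theorem X_pow_dvd_qPochInf2_sub (N : ℕ) :
    X ^ N ∣ qPochInf2 - ∏ j ∈ Finset.range N, (1 - X ^ (2 * (j + 1))) :=
  X_pow_dvd_mk_coeff_succ_sub (P := fun M => ∏ j ∈ Finset.range M, (1 - X ^ (2 * (j + 1))))
    (X_pow_dvd_prod_range_succ_sub fun j => X_pow_dvd_one_sub_X_pow_sub_one (by omega)) N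

theorem constantCoeff_qPoch (m : ℕ) : constantCoeff (qPoch m) = 1 := by
  simp [qPoch]

theorem constantCoeff_qPochInf : constantCoeff qPochInf = 1 := by
  rw [qPochInf, constantCoeff_mk, coeff_zero_eq_constantCoeff_apply, constantCoeff_qPoch]

theorem inv_qPoch_mul_qPoch (m : ℕ) : (qPoch m)⁻¹ * qPoch m = 1 :=
  PowerSeries.inv_mul_cancel _ (by simp [constantCoeff_qPoch])

theorem qPoch_succ (m : ℕ) : qPoch (m + 1) = qPoch m * (1 - X ^ (m + 1)) :=
  Finset.prod_range_succ _ _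

theorem negqPoch_succ (m : ℕ) : negqPoch (m + 1) = negqPoch m * (1 + X ^ (m + 1)) :=
  Finset.prod_range_succ _ _

theorem negqPoch_mul_qPoch (m : ℕ) :
    negqPoch m * qPoch m = ∏ j ∈ Finset.range m, (1 - X ^ (2 * (j + 1))) := by
  rw [negqPoch, qPoch, ← Finset.prod_mul_distrib]
  exact Finset.prod_congr rfl fun j _ => by ring

theorem one_add_X_mul_sum_range_mul_qPoch (N : ℕ) :
    (1 + X) * (∑ m ∈ Finset.range N, negqPoch m * X ^ (m + 1) * (qPoch m)⁻¹) * qPoch N =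
      X * negqPoch N * (1 - X ^ N) := by
  induction N with
  | zero => simp
  | succ N ih =>
    rw [Finset.sum_range_succ, qPoch_succ, negqPoch_succ]
    linear_combination (1 - X ^ (N + 1)) * ih +
      (1 + X) * negqPoch N * X ^ (N + 1) * (1 - X ^ (N + 1)) * inv_qPoch_mul_qPoch N

theorem sum_range_mul_one_add_X_mul_qPoch_sq (N : ℕ) :
    (∑ m ∈ Finset.range N, negqPoch m * X ^ (m + 1) * (qPoch m)⁻¹) * ((1 + X) * qPoch N ^ 2) =
      X * (∏ j ∈ Finset.range N, (1 - X ^ (2 * (j + 1)))) * (1 - X ^ N) := by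
  rw [← negqPoch_mul_qPoch]
  linear_combination qPoch N * one_add_X_mul_sum_range_mul_qPoch N

/-- `∑_{m ≥ 0} (-q;q)_m q^{m+1}/(q;q)_m = q (q²;q²)_∞ / ((1+q)((q;q)_∞)²)`,
the generating function identity for semi-strict stacks. -/
theorem semiStrict_genFn_eta_quotient :
    formalSum (fun m => negqPoch m * X ^ (m + 1) * (qPoch m)⁻¹) =
      X * qPochInf2 * ((1 + X) * qPochInf ^ 2)⁻¹ := by
  rw [eq_mul_inv_iff_mul_eq (by simp [constantCoeff_qPochInf])]
  refine eq_of_forall_X_pow_dvd_sub fun N => ?_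
  set π := Ideal.Quotient.mk (Ideal.span {(X : ℚ⟦X⟧) ^ N})
  have hπ (f g : ℚ⟦X⟧) : π f = π g ↔ X ^ N ∣ f - g := by
    rw [Ideal.Quotient.eq, Ideal.mem_span_singleton]
  have hsum := (hπ _ _).mpr <| X_pow_dvd_formalSum_sub
    (F := fun m => negqPoch m * X ^ (m + 1) * (qPoch m)⁻¹)
    (fun m => dvd_mul_of_dvd_left (dvd_mul_of_dvd_right (pow_dvd_pow X m.le_succ) _) _) N
  have hC := (hπ _ _).mpr (X_pow_dvd_qPochInf_sub N)
  have hB := (hπ _ _).mpr (X_pow_dvd_qPochInf2_sub N)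
  have hXN : π (X ^ N) = 0 := Ideal.Quotient.eq_zero_iff_mem.mpr (Ideal.mem_span_singleton_self _)
  rw [← hπ]
  calc π (formalSum _ * ((1 + X) * qPochInf ^ 2))
      = π ((∑ m ∈ Finset.range N, negqPoch m * X ^ (m + 1) * (qPoch m)⁻¹) *
          ((1 + X) * qPoch N ^ 2)) := by
        simp only [map_mul, map_add, map_pow, hsum, hC]
    _ = π (X * (∏ j ∈ Finset.range N, (1 - X ^ (2 * (j + 1)))) * (1 - X ^ N)) := by
        rw [sum_range_mul_one_add_X_mul_qPoch_sq]
    _ = π (X * qPochInf2) := by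
        simp only [map_mul, map_sub, map_one, hXN, hB, sub_zero, mul_one]
end

section
/- For |x| < 1, the limit as ε → 0⁺ of ε · Li₂(x; e^{-ε}) equals Li₂(x), where Li₂(x;q) := ∑_{m ≥ 1} x^m / (m(1-q^m)) is the quantum dilogarithm and Li₂(x) := ∑_{m ≥ 1} x^m/m² is the classical dilogarithm. -/
open Filter Complex Topology

/-!
Termwise, `ε / (1 - e^{-εn}) → 1 / n` as `ε → 0⁺`, since `1 - e^{-εn}` has derivative `n` at `0`.
The elementary bound `t / (1 - e^{-t}) ≤ 1 + t` gives `‖ε x^n / (n (1 - e^{-εn}))‖ ≤ 2 ‖x‖^n`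
for `0 < ε ≤ 1` and `n ≥ 1`, a summable majorant, so the limit passes through the sum by
dominated convergence (Tannery's theorem).
-/

lemma Real.div_one_sub_exp_neg_le_one_add {t : ℝ} (ht : 0 < t) :
    t / (1 - Real.exp (-t)) ≤ 1 + t := by
  have hden : 0 < 1 - Real.exp (-t) := sub_pos.mpr (Real.exp_lt_one_iff.mpr (by linarith))
  rw [div_le_iff₀ hden, Real.exp_neg]
  have hexp := Real.add_one_le_exp t
  field_simp
  nlinarith [Real.exp_pos t]

lemma Real.div_mul_one_sub_exp_neg_le {ε n : ℝ} (hε : 0 < ε) (hn : 1 ≤ n) :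
    ε / (n * (1 - Real.exp (-(ε * n)))) ≤ 1 + ε := by
  have hn0 : 0 < n := by linarith
  calc ε / (n * (1 - Real.exp (-(ε * n))))
      = ε * n / (1 - Real.exp (-(ε * n))) / n ^ 2 := by field_simp
    _ ≤ (1 + ε * n) / n ^ 2 := by
      gcongr
      exact Real.div_one_sub_exp_neg_le_one_add (mul_pos hε hn0)
    _ = 1 / n ^ 2 + ε / n := by field_simp
    _ ≤ 1 + ε := by
      gcongr
      · exact div_le_one_of_le₀ (one_le_pow₀ hn) (by positivity)
      · exact div_le_self hε.le hn

lemma norm_ofReal_mul_div_mul_one_sub_cexp_le {ε n : ℝ} (hε : 0 < ε) (hn : 1 ≤ n) (z : ℂ) :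
    ‖(ε : ℂ) * (z / (n * (1 - cexp (-(ε : ℂ) * n))))‖ ≤ (1 + ε) * ‖z‖ := by
  have hexp : cexp (-(ε : ℂ) * n) = (Real.exp (-(ε * n)) : ℂ) := by
    push_cast; ring_nf
  have hden : 0 < 1 - Real.exp (-(ε * n)) :=
    sub_pos.mpr (Real.exp_lt_one_iff.mpr (by nlinarith))
  calc ‖(ε : ℂ) * (z / (n * (1 - cexp (-(ε : ℂ) * n))))‖
      = ε / (n * (1 - Real.exp (-(ε * n)))) * ‖z‖ := by
        rw [hexp, norm_mul, norm_div, norm_mul, ← ofReal_one, ← ofReal_sub, norm_real,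
          norm_real, norm_real, Real.norm_of_nonneg hε.le, Real.norm_of_nonneg (by linarith),
          Real.norm_of_nonneg hden.le]
        ring
    _ ≤ (1 + ε) * ‖z‖ := by
      gcongr
      exact Real.div_mul_one_sub_exp_neg_le hε hn

lemma tendsto_ofReal_mul_inv_one_sub_cexp (c : ℂ) (hc : c ≠ 0) :
    Tendsto (fun ε : ℝ => (ε : ℂ) * (1 - cexp (-(ε : ℂ) * c))⁻¹) (𝓝[≠] 0) (𝓝 c⁻¹) := by
  have hderiv : HasDerivAt (fun t : ℝ => 1 - cexp (-(t : ℂ) * c)) c 0 := by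
    simpa using ((ofRealCLM.hasDerivAt (x := 0)).neg.mul_const c).cexp.const_sub 1
  refine ((hasDerivAt_iff_tendsto_slope.mp hderiv).inv₀ hc).congr fun t => ?_
  simp [slope_def_module, real_smul, ofReal_inv, mul_comm]

lemma tendsto_ofReal_mul_div_mul_one_sub_cexp (z : ℂ) {c : ℂ} (hc : c ≠ 0) :
    Tendsto (fun ε : ℝ => (ε : ℂ) * (z / (c * (1 - cexp (-(ε : ℂ) * c)))))
      (𝓝[≠] 0) (𝓝 (z / c ^ 2)) := by
  convert (tendsto_ofReal_mul_inv_one_sub_cexp c hc).const_mul (z / c) using 1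
  · ext ε
    rw [div_mul_eq_div_div]
    ring
  · rw [sq, div_mul_eq_div_div, div_eq_mul_inv]

/-- For `|x| < 1`, `lim_{ε→0⁺} ε · Li₂(x; e^{-ε}) = Li₂(x)`, where
`Li₂(x;q) = ∑_{m≥1} x^m/(m(1-q^m))` is the quantum dilogarithm and
`Li₂(x) = ∑_{m≥1} x^m/m²` the classical dilogarithm. -/
theorem quantum_dilog_limit (x : ℂ) (hx : ‖x‖ < 1) :
    Tendsto
      (fun ε : ℝ =>
        (ε : ℂ) * ∑' m : ℕ, x ^ (m + 1) /
          (((m : ℂ) + 1) * (1 - Complex.exp (-(ε : ℂ) * ((m : ℂ) + 1)))))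
      (nhdsWithin 0 (Set.Ioi 0))
      (nhds (∑' m : ℕ, x ^ (m + 1) / ((m : ℂ) + 1) ^ 2)) := by
  simp_rw [← tsum_mul_left]
  refine tendsto_tsum_of_dominated_convergence (bound := fun m => 2 * ‖x‖ ^ (m + 1))
    ((summable_geometric_of_lt_one (norm_nonneg x) hx).mul_left (2 * ‖x‖) |>.congr
      fun m => by ring) (fun m => ?_) ?_
  · exact (tendsto_ofReal_mul_div_mul_one_sub_cexp _ (Nat.cast_add_one_ne_zero m)).mono_left
      (nhdsGT_le_nhdsNE 0)
  · filter_upwards [Ioc_mem_nhdsGT (zero_lt_one' ℝ)] with ε ⟨hε, hε1⟩ m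
    have hm : (1 : ℝ) ≤ m + 1 := by simp
    calc _ ≤ (1 + ε) * ‖x ^ (m + 1)‖ :=
          mod_cast norm_ofReal_mul_div_mul_one_sub_cexp_le hε hm (x ^ (m + 1))
      _ ≤ 2 * ‖x‖ ^ (m + 1) := by rw [norm_pow]; gcongr; linarith
end

section
/- Li₂(φ^{-2}) = π²/15 - (log φ)², where φ = (1+√5)/2 is the golden ratio and Li₂(x) = ∑_{m ≥ 1} x^m/m² is the dilogarithm. -/
/-!
Landen's evaluation. The conjugate ψ = φ⁻¹ satisfies ψ² + ψ = 1, so 1 - ψ = ψ², 1 - ψ² = ψ and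
ψ²/(ψ² - 1) = -ψ. Euler's reflection formula Li₂(x) + Li₂(1 - x) = π²/6 - log x log(1 - x) at
x = ψ, Landen's identity Li₂(x) + Li₂(x/(x - 1)) = -½ log²(1 - x) at x = ψ², and the duplication
formula Li₂(x) + Li₂(-x) = ½ Li₂(x²) at x = ψ are then three linear equations in Li₂(ψ), Li₂(ψ²)
and Li₂(-ψ), which determine Li₂(ψ²). The first two identities hold because both sides have the
same derivative, by Li₂'(x) = -log(1 - x)/x, and agree at an endpoint; the third comes from
splitting the series into even and odd terms.
-/
open Real Filter Set Topology

noncomputable def dilog (x : ℝ) : ℝ := ∑' n : ℕ, x ^ (n + 1) / ((n : ℝ) + 1) ^ 2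

lemma summable_one_div_succ_sq : Summable fun n : ℕ => 1 / ((n : ℝ) + 1) ^ 2 := by
  exact_mod_cast (summable_nat_add_iff 1).mpr (summable_one_div_nat_pow.mpr one_lt_two)

lemma norm_pow_succ_div_succ_sq_le {x : ℝ} (hx : |x| ≤ 1) (n : ℕ) :
    ‖x ^ (n + 1) / ((n : ℝ) + 1) ^ 2‖ ≤ 1 / ((n : ℝ) + 1) ^ 2 := by
  rw [norm_div, norm_pow, norm_eq_abs, norm_of_nonneg (by positivity)]
  gcongr
  exact pow_le_one₀ (abs_nonneg x) hx

lemma hasSum_dilog {x : ℝ} (hx : |x| ≤ 1) :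
    HasSum (fun n : ℕ => x ^ (n + 1) / ((n : ℝ) + 1) ^ 2) (dilog x) :=
  (Summable.of_norm_bounded summable_one_div_succ_sq (norm_pow_succ_div_succ_sq_le hx)).hasSum

lemma dilog_zero : dilog 0 = 0 := by
  simp [dilog]

lemma dilog_one : dilog 1 = π ^ 2 / 6 := by
  have h := (hasSum_nat_add_iff (f := fun n : ℕ => 1 / (n : ℝ) ^ 2) 1).mpr
    (by simpa using hasSum_zeta_two)
  simpa [dilog] using h.tsum_eq

lemma continuousOn_dilog : ContinuousOn dilog (Icc (-1) 1) :=
  continuousOn_tsum (fun _ => by fun_prop) summable_one_div_succ_sq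
    fun n _ hx => norm_pow_succ_div_succ_sq_le (abs_le.mpr hx) n

lemma hasDerivAt_dilog_tsum {x : ℝ} (hx : |x| < 1) :
    HasDerivAt dilog (∑' n : ℕ, x ^ n / ((n : ℝ) + 1)) x := by
  set r := (1 + |x|) / 2 with hr
  have hr0 : 0 < r := by positivity
  have hr1 : r < 1 := by linarith
  have hxr : x ∈ Ioo (-r) r := abs_lt.mp (by linarith)
  refine hasDerivAt_tsum_of_isPreconnected (u := fun n : ℕ => r ^ n)
    (g := fun n y => y ^ (n + 1) / ((n : ℝ) + 1) ^ 2) (g' := fun n y => y ^ n / ((n : ℝ) + 1))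
    (summable_geometric_of_lt_one hr0.le hr1)
    isOpen_Ioo isPreconnected_Ioo (fun n y _ => ?_) (fun n y hy => ?_)
    (show (0 : ℝ) ∈ Ioo (-r) r by simpa) ?_ hxr
  · refine ((hasDerivAt_pow (n + 1) y).div_const (((n : ℝ) + 1) ^ 2)).congr_deriv ?_
    rw [Nat.add_sub_cancel]
    push_cast
    field_simp
  · rw [norm_div, norm_pow, norm_eq_abs, norm_of_nonneg (by positivity)]
    calc |y| ^ n / ((n : ℝ) + 1) ≤ |y| ^ n := div_le_self (by positivity) (by simp)
      _ ≤ r ^ n := by gcongr; exact abs_le.mpr ⟨hy.1.le, hy.2.le⟩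
  · simp

lemma tsum_pow_div_succ {x : ℝ} (hx : |x| < 1) (hx0 : x ≠ 0) :
    ∑' n : ℕ, x ^ n / ((n : ℝ) + 1) = -log (1 - x) / x := by
  have hsum : Summable fun n : ℕ => x ^ n / ((n : ℝ) + 1) := by
    refine .of_norm_bounded (summable_geometric_of_lt_one (abs_nonneg x) hx) fun n => ?_
    rw [norm_div, norm_pow, norm_eq_abs, norm_of_nonneg (by positivity)]
    exact div_le_self (by positivity) (by simp)
  rw [eq_div_iff hx0, mul_comm, ← hsum.tsum_mul_left]
  refine ((hasSum_pow_div_log_of_abs_lt_one hx).congr_fun fun n => ?_).tsum_eq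
  ring

lemma hasDerivAt_dilog {x : ℝ} (hx : |x| < 1) (hx0 : x ≠ 0) :
    HasDerivAt dilog (-log (1 - x) / x) x :=
  tsum_pow_div_succ hx hx0 ▸ hasDerivAt_dilog_tsum hx

lemma eq_of_hasDerivAt_eq_zero {f : ℝ → ℝ} {a b : ℝ} (hab : a ≤ b)
    (hf : ContinuousOn f (Icc a b)) (hf' : ∀ x ∈ Ioo a b, HasDerivAt f 0 x) : f b = f a := by
  rcases hab.eq_or_lt with rfl | hab
  · rfl
  obtain ⟨c, -, hc⟩ := exists_hasDerivAt_eq_slope f (fun _ => 0) hab hf hf'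
  rw [eq_comm, div_eq_zero_iff, sub_eq_zero] at hc
  exact hc.resolve_right (sub_ne_zero.mpr hab.ne')

lemma continuousAt_log_mul_log_one_sub : ContinuousAt (fun t => log t * log (1 - t)) 0 := by
  have hslope : Tendsto (fun t => log (1 - t) / t) (𝓝[≠] 0) (𝓝 (-1)) := by
    have hd : HasDerivAt (fun t => log (1 - t)) (-1) 0 := by
      simpa using ((hasDerivAt_id (0 : ℝ)).const_sub 1).log (by norm_num)
    exact (hasDerivAt_iff_tendsto_slope.mp hd).congr fun t => by simp [slope_def_field]
  have hmul : Tendsto (fun t => t * log t) (𝓝[≠] 0) (𝓝 0) := by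
    simpa using continuous_mul_log.continuousAt (x := 0) |>.tendsto.mono_left nhdsWithin_le_nhds
  rw [← continuousWithinAt_compl_self, ContinuousWithinAt, log_zero, zero_mul]
  refine Tendsto.congr' ?_ (by simpa using hslope.mul hmul)
  filter_upwards [self_mem_nhdsWithin] with t ht
  field_simp [show t ≠ 0 from ht]

theorem dilog_add_dilog_one_sub {x : ℝ} (h0 : 0 ≤ x) (h1 : x < 1) :
    dilog x + dilog (1 - x) + log x * log (1 - x) = π ^ 2 / 6 := by
  let F y := dilog y + dilog (1 - y) + log y * log (1 - y)
  -- `log 0 = 0` in Lean, so `F 0 = π²/6`, and `F` is continuous at `0`.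
  have hF0 : F 0 = π ^ 2 / 6 := by simp [F, dilog_zero, dilog_one]
  rw [← hF0]
  refine eq_of_hasDerivAt_eq_zero (f := F) h0 ?_ fun y ⟨hy0, hyx⟩ => ?_
  · have hIcc : Icc 0 x ⊆ Icc (-1) 1 := Icc_subset_Icc (by norm_num) h1.le
    have hmaps : MapsTo (1 - ·) (Icc 0 x) (Icc (-1) 1) := fun y hy =>
      ⟨by linarith [hy.2], by linarith [hy.1]⟩
    refine ((continuousOn_dilog.mono hIcc).add (continuousOn_dilog.comp (by fun_prop) hmaps)).add
      (continuousOn_of_forall_continuousAt fun t ht => ?_)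
    rcases ht.1.eq_or_lt with rfl | ht0
    · exact continuousAt_log_mul_log_one_sub
    · exact (continuousAt_log ht0.ne').mul
        ((continuousAt_log (by linarith [ht.2])).comp (by fun_prop))
  · have hy1 : y < 1 := hyx.trans_le h1.le
    have hne : 1 - y ≠ 0 := sub_ne_zero.mpr hy1.ne'
    have hsub := (hasDerivAt_id y).const_sub 1
    have h1 := hasDerivAt_dilog (abs_lt.mpr ⟨by linarith, hy1⟩) hy0.ne'
    have h2 := (hasDerivAt_dilog (abs_lt.mpr ⟨by linarith, by linarith⟩) hne).comp y hsub
    have h3 := (hasDerivAt_log hy0.ne').mul (hsub.log hne)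
    refine ((h1.add h2).add h3).congr_deriv ?_
    simp only [id, sub_sub_cancel]
    field_simp
    ring

lemma abs_div_sub_one_lt_one {x : ℝ} (hx : x < 1 / 2) : |x / (x - 1)| < 1 := by
  rw [abs_div, abs_of_neg (by linarith : x - 1 < 0), div_lt_one (by linarith), abs_lt]
  constructor <;> linarith

theorem dilog_add_dilog_div_sub_one {x : ℝ} (h0 : 0 ≤ x) (h1 : x < 1 / 2) :
    dilog x + dilog (x / (x - 1)) = -log (1 - x) ^ 2 / 2 := by
  let G y := dilog y + dilog (y / (y - 1)) + log (1 - y) ^ 2 / 2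
  suffices G x = G 0 by simp [G, dilog_zero] at this; linarith
  refine eq_of_hasDerivAt_eq_zero h0 ?_ fun y ⟨hy0, hyx⟩ => ?_
  · have hIcc : Icc 0 x ⊆ Icc (-1) 1 := Icc_subset_Icc (by norm_num) (by linarith)
    have hmaps : MapsTo (fun y => y / (y - 1)) (Icc 0 x) (Icc (-1) 1) := fun y hy =>
      abs_le.mp (abs_div_sub_one_lt_one (by linarith [hy.2])).le
    have hne : ∀ y ∈ Icc 0 x, y - 1 ≠ 0 := fun y hy => by linarith [hy.2]
    refine ((continuousOn_dilog.mono hIcc).add (continuousOn_dilog.comp ?_ hmaps)).add ?_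
    · exact continuousOn_id.div (continuousOn_id.sub continuousOn_const) hne
    · exact (((continuousOn_const.sub continuousOn_id).log fun y hy =>
        (sub_pos.mpr (by linarith [hy.2] : y < 1)).ne').pow 2).div_const 2
  · have hy1 : y < 1 / 2 := hyx.trans_le h1.le
    have hne : y - 1 ≠ 0 := by linarith
    have hne' : 1 - y ≠ 0 := by linarith
    have hq : HasDerivAt (fun z => z / (z - 1)) (-1 / (y - 1) ^ 2) y := by
      refine ((hasDerivAt_id y).div ((hasDerivAt_id y).sub_const 1) hne).congr_deriv ?_
      simp only [id]
      field_simp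
      ring
    have h1 := hasDerivAt_dilog (abs_lt.mpr ⟨by linarith, by linarith⟩) hy0.ne'
    have h2 := (hasDerivAt_dilog (abs_div_sub_one_lt_one hy1) (div_ne_zero hy0.ne' hne)).comp y hq
    have h3 := ((((hasDerivAt_id y).const_sub 1).log hne').pow 2).div_const 2
    refine ((h1.add h2).add h3).congr_deriv ?_
    have : 1 - y / (y - 1) = (1 - y)⁻¹ := by field_simp; ring
    simp only [id, this, log_inv]
    field_simp
    ring

theorem dilog_add_dilog_neg {x : ℝ} (hx : |x| ≤ 1) :
    dilog x + dilog (-x) = dilog (x ^ 2) / 2 := by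
  have hx2 : |x ^ 2| ≤ 1 := by rw [abs_pow]; exact pow_le_one₀ (abs_nonneg x) hx
  refine ((hasSum_dilog hx).add (hasSum_dilog (x := -x) (by rwa [abs_neg]))).unique ?_
  rw [← zero_add (dilog (x ^ 2) / 2)]
  refine HasSum.even_add_odd (f := fun n : ℕ =>
    x ^ (n + 1) / ((n : ℝ) + 1) ^ 2 + (-x) ^ (n + 1) / ((n : ℝ) + 1) ^ 2) ?_ ?_
  · refine hasSum_zero.congr_fun fun k => ?_
    rw [Odd.neg_pow ⟨k, rfl⟩]
    ring
  · refine ((hasSum_dilog hx2).div_const 2).congr_fun fun k => ?_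
    rw [Even.neg_pow ⟨k + 1, by ring⟩, ← pow_mul, show 2 * (k + 1) = 2 * k + 1 + 1 by ring]
    push_cast
    field_simp
    ring

theorem dilog_sq_of_sq_add_self_eq_one {ψ : ℝ} (hψ : 0 < ψ) (h : ψ ^ 2 + ψ = 1) :
    dilog (ψ ^ 2) = π ^ 2 / 15 - log ψ ^ 2 := by
  have hψ1 : ψ < 1 := by nlinarith
  have hrefl := dilog_add_dilog_one_sub hψ.le hψ1
  have hlanden := dilog_add_dilog_div_sub_one (sq_nonneg ψ) (by nlinarith)
  have hdup := dilog_add_dilog_neg (abs_le.mpr ⟨by linarith, hψ1.le⟩)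
  have hsq_div : ψ ^ 2 / (ψ ^ 2 - 1) = -ψ := by
    rw [show ψ ^ 2 - 1 = -ψ by linarith]
    field_simp
  rw [show 1 - ψ = ψ ^ 2 by linarith, log_pow] at hrefl
  rw [hsq_div, show 1 - ψ ^ 2 = ψ by linarith] at hlanden
  linear_combination (2 / 5) * (hrefl - hdup + hlanden)

/-- `Li₂(φ⁻²) = π²/15 - (log φ)²`, where `φ = (1+√5)/2` is the golden ratio and
`Li₂(x) = ∑_{m≥1} x^m/m²`. -/
theorem dilog_golden_ratio :
    ∑' m : ℕ, (((1 + Real.sqrt 5) / 2)⁻¹ ^ 2) ^ (m + 1) / ((m : ℝ) + 1) ^ 2 =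
      Real.pi ^ 2 / 15 - (Real.log ((1 + Real.sqrt 5) / 2)) ^ 2 := by
  have hφ : 0 < (1 + √5) / 2 := by positivity
  have hψ : ((1 + √5) / 2)⁻¹ ^ 2 + ((1 + √5) / 2)⁻¹ = 1 := by
    field_simp
    nlinarith [sq_sqrt (show (0 : ℝ) ≤ 5 by norm_num)]
  have h := dilog_sq_of_sq_add_self_eq_one (inv_pos.mpr hφ) hψ
  rwa [log_inv, neg_sq] at h
end

section
/- As ε → 0⁺, the false theta function L(e^{-ε}) = ∑_{n ≥ 1} (-1)^{n-1} e^{-ε n(n+1)/2} satisfies L(e^{-ε}) = 1/2 + O(ε); in particular lim_{ε→0⁺} L(e^{-ε}) = 1/2. -/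
open Filter Topology Asymptotics

open scoped fwdDiff

/-!
Write `f n = exp (-ε (n + 1) (n + 2) / 2)`. Euler's transformation
`∑ (-1)ⁿ f n = f 0 / 2 - (1 / 2) ∑ (-1)ⁿ Δf n`, applied four times, expresses the false theta
value as `(15 f 0 - 11 f 1 + 5 f 2 - f 3) / 16 = 1 / 2 + O(ε)` plus `1 / 16` of the alternating
sum of the fourth differences `Δ⁴f`. Since `f (n + k) = f n uᵏ q^(k choose 2)` with
`u = e^{-ε(n+2)}` and `q = e^{-ε}`, the fourth difference is `f n` times a polynomial in `u, q`
bounded by `(1 - u)⁴ + 6 (1 - u)² (1 - q) + 21 (1 - q)²`, where `1 - u ≤ ε (n + 2)` and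
`1 - q ≤ ε`. The Gaussian factor `e^{-ε(n+1)²/2}` of `f n` absorbs the powers of `n`, so
`|Δ⁴f n| = O(ε² e^{-ε(n+1)/2})`, and the geometric series over `n` costs only a factor `2 / ε`.
-/

section EulerTransform

variable {E : Type*} [AddCommGroup E] [Module ℝ E] [TopologicalSpace E] [IsTopologicalAddGroup E]
  {f : ℕ → E} {s : E}

theorem HasSum.alternating_fwdDiff (hs : HasSum (fun n ↦ (-1 : ℝ) ^ n • f n) s) :
    HasSum (fun n ↦ (-1 : ℝ) ^ n • Δ_[1] f n) (f 0 - (2 : ℝ) • s) := by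
  have hshift : HasSum (fun n ↦ (-1 : ℝ) ^ (n + 1) • f (n + 1)) (s - f 0) := by
    simpa using (hasSum_nat_add_iff' 1).mpr hs
  convert hshift.neg.sub hs using 1
  · ext n
    simp only [fwdDiff, smul_sub, pow_succ, mul_neg_one, neg_smul, neg_neg]
  · rw [two_smul]; abel

theorem HasSum.alternating_fwdDiff_iter (hs : HasSum (fun n ↦ (-1 : ℝ) ^ n • f n) s) (k : ℕ) :
    HasSum (fun n ↦ (-1 : ℝ) ^ n • Δ_[1] ^[k] f n)
      ((-2 : ℝ) ^ k • (s - ∑ j ∈ Finset.range k, ((-1 : ℝ) ^ j / 2 ^ (j + 1)) • Δ_[1] ^[j] f 0)) := by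
  induction k with
  | zero => simpa using hs
  | succ k ih =>
    convert ih.alternating_fwdDiff using 1
    · ext n; rw [Function.iterate_succ_apply']
    · have hc : (-2 : ℝ) ^ (k + 1) * ((-1) ^ k / 2 ^ (k + 1)) = -1 := by
        rw [pow_succ, pow_succ, mul_div, mul_right_comm, ← mul_pow]
        norm_num
      rw [Finset.sum_range_succ, smul_sub, smul_add, smul_smul, hc]
      module

end EulerTransform

/-- `∑_{k ≤ 4} (-1)ᵏ (4 choose k) uᵏ q^(k choose 2)`. -/
def fourthDiffFactor (u q : ℝ) : ℝ :=
  1 - 4 * u + 6 * u ^ 2 * q - 4 * u ^ 3 * q ^ 3 + u ^ 4 * q ^ 6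

theorem abs_fourthDiffFactor_le {u q : ℝ} (hu₀ : 0 ≤ u) (hu₁ : u ≤ 1) (hq₀ : 0 ≤ q)
    (hq₁ : q ≤ 1) :
    |fourthDiffFactor u q| ≤ (1 - u) ^ 4 + 6 * (1 - u) ^ 2 * (1 - q) + 21 * (1 - q) ^ 2 := by
  have hv : 0 ≤ 1 - u := by linarith
  have hd : 0 ≤ 1 - q := by linarith
  have bernoulli (m : ℕ) : 1 - q ^ m ≤ m * (1 - q) := by
    have := one_add_mul_le_pow (by linarith : (-2 : ℝ) ≤ q - 1) m
    rw [add_sub_cancel] at this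
    linarith
  have hq3 : 0 ≤ 1 - q ^ 3 ∧ 1 - q ^ 3 ≤ 3 * (1 - q) :=
    ⟨sub_nonneg.mpr (pow_le_one₀ hq₀ hq₁), by exact_mod_cast bernoulli 3⟩
  have hq6 : 0 ≤ 1 - q ^ 6 ∧ 1 - q ^ 6 ≤ 6 * (1 - q) :=
    ⟨sub_nonneg.mpr (pow_le_one₀ hq₀ hq₁), by exact_mod_cast bernoulli 6⟩
  have hc : |3 - 3 * q ^ 2 - 2 * q ^ 3 - q ^ 4| ≤ 3 := by
    rw [abs_le]
    constructor <;> nlinarith [pow_le_one₀ hq₀ hq₁ (n := 2), pow_le_one₀ hq₀ hq₁ (n := 3),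
      pow_le_one₀ hq₀ hq₁ (n := 4), pow_nonneg hq₀ 2, pow_nonneg hq₀ 3, pow_nonneg hq₀ 4]
  -- at `q = 1` the factor is `(1 - u)⁴`, and its first-order term in `1 - q` carries `(1 - u)²`
  set B := (1 - q) ^ 2 * (3 - 3 * q ^ 2 - 2 * q ^ 3 - q ^ 4) + 2 * (1 - u) * (1 - q ^ 3) ^ 2
    + (1 - u) ^ 2 * (1 - q ^ 6)
  have hP : fourthDiffFactor u q = (1 - u) ^ 4 - u ^ 2 * B := by
    simp only [fourthDiffFactor, B]; ring
  have hB : |B| ≤ 21 * (1 - q) ^ 2 + 6 * (1 - u) ^ 2 * (1 - q) := by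
    have h1 : |(1 - q) ^ 2 * (3 - 3 * q ^ 2 - 2 * q ^ 3 - q ^ 4)| ≤ 3 * (1 - q) ^ 2 := by
      rw [abs_mul, abs_of_nonneg (sq_nonneg _), mul_comm]
      exact mul_le_mul_of_nonneg_right hc (sq_nonneg _)
    have h2 : 2 * (1 - u) * (1 - q ^ 3) ^ 2 ≤ 18 * (1 - q) ^ 2 := by
      have := pow_le_pow_left₀ hq3.1 hq3.2 2
      nlinarith
    have h3 : (1 - u) ^ 2 * (1 - q ^ 6) ≤ 6 * (1 - u) ^ 2 * (1 - q) := by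
      linarith [mul_le_mul_of_nonneg_left hq6.2 (sq_nonneg (1 - u))]
    have := abs_le.mp h1
    rw [abs_le]
    constructor <;> linarith [mul_nonneg hv (sq_nonneg (1 - q ^ 3)),
      mul_nonneg (sq_nonneg (1 - u)) hq6.1, mul_nonneg (sq_nonneg (1 - u)) hd]
  rw [hP]
  calc |(1 - u) ^ 4 - u ^ 2 * B| ≤ |(1 - u) ^ 4| + |u ^ 2 * B| := abs_sub _ _
    _ ≤ (1 - u) ^ 4 + |B| := by
      rw [abs_of_nonneg (by positivity), abs_mul, abs_of_nonneg (by positivity)]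
      gcongr
      exact mul_le_of_le_one_left (abs_nonneg B) (pow_le_one₀ hu₀ hu₁)
    _ ≤ _ := by linarith

noncomputable def falseThetaTerm (ε : ℝ) (n : ℕ) : ℝ :=
  Real.exp (-ε * (((n : ℝ) + 1) * ((n : ℝ) + 2) / 2))

theorem falseThetaTerm_pos (ε : ℝ) (n : ℕ) : 0 < falseThetaTerm ε n := Real.exp_pos _

theorem falseThetaTerm_le_one {ε : ℝ} (hε : 0 ≤ ε) (n : ℕ) : falseThetaTerm ε n ≤ 1 := by
  rw [falseThetaTerm, Real.exp_le_one_iff, neg_mul, neg_nonpos]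
  positivity

theorem one_sub_le_falseThetaTerm (ε : ℝ) (n : ℕ) :
    1 - ε * (((n : ℝ) + 1) * ((n : ℝ) + 2) / 2) ≤ falseThetaTerm ε n := by
  have := Real.add_one_le_exp (-ε * (((n : ℝ) + 1) * ((n : ℝ) + 2) / 2))
  rw [falseThetaTerm]
  linarith

theorem falseThetaTerm_add (ε : ℝ) (n k : ℕ) : falseThetaTerm ε (n + k) =
    falseThetaTerm ε n * Real.exp (-ε * (n + 2)) ^ k * Real.exp (-ε) ^ k.choose 2 := by
  simp only [falseThetaTerm, ← Real.exp_nat_mul, ← Real.exp_add, Nat.cast_choose_two]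
  push_cast
  ring_nf

theorem falseThetaTerm_eq_exp_mul_pow (ε : ℝ) (n : ℕ) : falseThetaTerm ε n =
    Real.exp (-(ε * (n + 1) ^ 2 / 2)) * Real.exp (-(ε / 2)) ^ (n + 1) := by
  simp only [falseThetaTerm, ← Real.exp_nat_mul, ← Real.exp_add]
  push_cast
  ring_nf

theorem falseThetaTerm_le_pow {ε : ℝ} (hε : 0 ≤ ε) (n : ℕ) :
    falseThetaTerm ε n ≤ Real.exp (-(ε / 2)) ^ (n + 1) := by
  rw [falseThetaTerm_eq_exp_mul_pow]
  refine mul_le_of_le_one_left (by positivity) ?_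
  rw [Real.exp_le_one_iff, neg_nonpos]
  positivity

theorem fwdDiff_iter_four_falseThetaTerm (ε : ℝ) (n : ℕ) :
    Δ_[1] ^[4] (falseThetaTerm ε) n =
      falseThetaTerm ε n * fourthDiffFactor (Real.exp (-ε * (n + 2))) (Real.exp (-ε)) := by
  simp only [fwdDiff_iter_eq_sum_shift, Finset.sum_range_succ, Finset.sum_range_zero, smul_eq_mul,
    falseThetaTerm_add, fourthDiffFactor]
  norm_num [Nat.choose_two_right]
  ring

theorem abs_fwdDiff_iter_four_falseThetaTerm_le {ε : ℝ} (hε : 0 ≤ ε) (n : ℕ) :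
    |Δ_[1] ^[4] (falseThetaTerm ε) n| ≤ 168 * ε ^ 2 * Real.exp (-(ε / 2)) ^ (n + 1) := by
  rw [fwdDiff_iter_four_falseThetaTerm, abs_mul, falseThetaTerm_eq_exp_mul_pow,
    abs_of_pos (by positivity)]
  set u := Real.exp (-ε * (n + 2))
  set q := Real.exp (-ε)
  set x := ε * (n + 1) ^ 2 / 2
  have hx : 0 ≤ x := by positivity
  have hu : 1 - u ≤ 2 * ε * (n + 1) := by
    nlinarith [Real.add_one_le_exp (-ε * (n + 2)), (n.cast_nonneg : (0 : ℝ) ≤ n)]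
  have hq : 1 - q ≤ ε := by linarith [Real.add_one_le_exp (-ε)]
  have hu₀ : 0 ≤ 1 - u := by
    simp only [u, sub_nonneg, Real.exp_le_one_iff]
    nlinarith [(n.cast_nonneg : (0 : ℝ) ≤ n)]
  have hq₀ : 0 ≤ 1 - q := by simp only [q, sub_nonneg, Real.exp_le_one_iff]; linarith
  have hu2 : (1 - u) ^ 2 ≤ 8 * ε * x := by
    calc (1 - u) ^ 2 ≤ (2 * ε * (n + 1)) ^ 2 := pow_le_pow_left₀ hu₀ hu 2
      _ = 8 * ε * x := by ring
  have hP : |fourthDiffFactor u q| ≤ ε ^ 2 * (64 * x ^ 2 + 48 * x + 21) := by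
    refine (abs_fourthDiffFactor_le (Real.exp_nonneg _) (by linarith) (Real.exp_nonneg _)
      (by linarith)).trans ?_
    have h4 : (1 - u) ^ 4 ≤ (8 * ε * x) ^ 2 := by
      rw [show (1 - u) ^ 4 = ((1 - u) ^ 2) ^ 2 by ring]
      exact pow_le_pow_left₀ (sq_nonneg _) hu2 2
    have h2 : (1 - u) ^ 2 * (1 - q) ≤ 8 * ε * x * ε := mul_le_mul hu2 hq hq₀ (by positivity)
    have h0 : (1 - q) ^ 2 ≤ ε ^ 2 := pow_le_pow_left₀ hq₀ hq 2
    linarith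
  have hexp : (64 * x ^ 2 + 48 * x + 21) * Real.exp (-x) ≤ 168 := by
    have h := Real.quadratic_le_exp_of_nonneg hx
    rw [Real.exp_neg, ← div_eq_mul_inv, div_le_iff₀ (Real.exp_pos x)]
    nlinarith
  calc Real.exp (-x) * Real.exp (-(ε / 2)) ^ (n + 1) * |fourthDiffFactor u q|
      ≤ Real.exp (-x) * Real.exp (-(ε / 2)) ^ (n + 1) * (ε ^ 2 * (64 * x ^ 2 + 48 * x + 21)) := by
        gcongr
    _ = ε ^ 2 * ((64 * x ^ 2 + 48 * x + 21) * Real.exp (-x)) * Real.exp (-(ε / 2)) ^ (n + 1) := by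
        ring
    _ ≤ ε ^ 2 * 168 * Real.exp (-(ε / 2)) ^ (n + 1) := by gcongr
    _ = 168 * ε ^ 2 * Real.exp (-(ε / 2)) ^ (n + 1) := by ring

theorem abs_sum_fwdDiff_falseThetaTerm_sub_half_le {ε : ℝ} (hε : 0 ≤ ε) :
    |∑ j ∈ Finset.range 4, ((-1 : ℝ) ^ j / 2 ^ (j + 1)) • Δ_[1] ^[j] (falseThetaTerm ε) 0 - 1 / 2|
      ≤ 3 * ε := by
  simp only [fwdDiff_iter_eq_sum_shift, Finset.sum_range_succ, Finset.sum_range_zero, smul_eq_mul]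
  norm_num
  have h0 := one_sub_le_falseThetaTerm ε 0
  have h1 := one_sub_le_falseThetaTerm ε 1
  have h2 := one_sub_le_falseThetaTerm ε 2
  have h3 := one_sub_le_falseThetaTerm ε 3
  norm_num at h0 h1 h2 h3
  rw [abs_le]
  constructor <;> linarith [falseThetaTerm_le_one hε 0, falseThetaTerm_le_one hε 1,
    falseThetaTerm_le_one hε 2, falseThetaTerm_le_one hε 3]

theorem hasSum_exp_neg_pow_succ {a : ℝ} (ha : 0 < a) :
    HasSum (fun n : ℕ ↦ Real.exp (-a) ^ (n + 1)) (Real.exp a - 1)⁻¹ := by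
  have h := (hasSum_geometric_of_lt_one (Real.exp_nonneg (-a))
    (Real.exp_lt_one_iff.mpr (neg_neg_of_pos ha))).mul_left (Real.exp (-a))
  have hval : Real.exp (-a) * (1 - Real.exp (-a))⁻¹ = (Real.exp a - 1)⁻¹ := by
    have : 1 < Real.exp a := Real.one_lt_exp_iff.mpr ha
    rw [Real.exp_neg]
    field_simp
  simpa only [pow_succ', hval] using h

theorem summable_alternating_falseThetaTerm {ε : ℝ} (hε : 0 < ε) :
    Summable fun n ↦ (-1 : ℝ) ^ n • falseThetaTerm ε n := by
  refine (hasSum_exp_neg_pow_succ (half_pos hε)).summable.of_norm_bounded fun n ↦ ?_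
  rw [norm_smul, norm_pow, norm_neg, norm_one, one_pow, one_mul,
    Real.norm_of_nonneg (falseThetaTerm_pos ε n).le]
  exact falseThetaTerm_le_pow hε.le n

theorem abs_tsum_alternating_fwdDiff_iter_four_falseThetaTerm_le {ε : ℝ} (hε : 0 < ε) :
    |∑' n, (-1 : ℝ) ^ n • Δ_[1] ^[4] (falseThetaTerm ε) n| ≤ 336 * ε := by
  refine (tsum_of_norm_bounded (f := fun n ↦ (-1 : ℝ) ^ n • Δ_[1] ^[4] (falseThetaTerm ε) n)
    ((hasSum_exp_neg_pow_succ (half_pos hε)).mul_left (168 * ε ^ 2)) fun n ↦ ?_).trans ?_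
  · rw [norm_smul, norm_pow, norm_neg, norm_one, one_pow, one_mul, Real.norm_eq_abs]
    exact abs_fwdDiff_iter_four_falseThetaTerm_le hε.le n
  · have : ε / 2 ≤ Real.exp (ε / 2) - 1 := by linarith [Real.add_one_le_exp (ε / 2)]
    calc 168 * ε ^ 2 * (Real.exp (ε / 2) - 1)⁻¹ ≤ 168 * ε ^ 2 * (ε / 2)⁻¹ := by gcongr
      _ = 336 * ε := by field_simp; ring

theorem abs_tsum_falseThetaTerm_sub_half_le {ε : ℝ} (hε : 0 < ε) :
    |∑' n, (-1 : ℝ) ^ n * falseThetaTerm ε n - 1 / 2| ≤ 24 * ε := by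
  have hhead := abs_sum_fwdDiff_falseThetaTerm_sub_half_le hε.le
  have htail := abs_tsum_alternating_fwdDiff_iter_four_falseThetaTerm_le hε
  rw [((summable_alternating_falseThetaTerm hε).hasSum.alternating_fwdDiff_iter 4).tsum_eq]
    at htail
  rw [abs_le] at hhead htail ⊢
  simp only [smul_eq_mul] at hhead htail
  constructor <;> linarith

/-- As `ε → 0⁺`, the false theta function
`L(e^{-ε}) = ∑_{n≥1} (-1)^{n-1} e^{-εn(n+1)/2}` satisfies `L(e^{-ε}) = 1/2 + O(ε)`;
in particular its limit is `1/2`. -/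
theorem false_theta_asymptotic :
    (fun ε : ℝ =>
        (∑' n : ℕ, (-1 : ℝ) ^ n * Real.exp (-ε * (((n : ℝ) + 1) * ((n : ℝ) + 2) / 2))) - 1 / 2)
      =O[nhdsWithin 0 (Set.Ioi 0)] (fun ε : ℝ => ε) ∧
    Tendsto
      (fun ε : ℝ =>
        ∑' n : ℕ, (-1 : ℝ) ^ n * Real.exp (-ε * (((n : ℝ) + 1) * ((n : ℝ) + 2) / 2)))
      (nhdsWithin 0 (Set.Ioi 0)) (nhds (1 / 2)) := by
  have hO : (fun ε ↦ ∑' n : ℕ, (-1 : ℝ) ^ n * falseThetaTerm ε n - 1 / 2)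
      =O[𝓝[>] 0] fun ε ↦ ε := by
    refine IsBigO.of_bound 24 ?_
    filter_upwards [self_mem_nhdsWithin] with ε (hε : 0 < ε)
    rw [Real.norm_eq_abs, Real.norm_eq_abs, abs_of_pos hε]
    exact abs_tsum_falseThetaTerm_sub_half_le hε
  have hε : Tendsto (fun ε : ℝ ↦ ε) (𝓝[>] 0) (𝓝 0) := nhdsWithin_le_nhds
  exact ⟨hO, tendsto_sub_nhds_zero_iff.mp (hO.trans_tendsto hε)⟩
end
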